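/- For integers k ≥ 2 and d ≥ 2^k + 1, the singular series 𝔖(N) = ∑_{q=1}^∞ ∑_{1 ≤ a ≤ q, (a,q)=1} G(a/q)^d e^{-2πi N a/q} converges absolutely and satisfies 𝔖(N) ≤ A_k for a constant A_k depending only on k, uniformly in N ∈ ℕ and d ≥ 2^k + 1. -/

import Mathlib

noncomputable def e (x : ℝ) : ℂ := Complex.exp (2 * Real.pi * Complex.I * x)

noncomputable def warGauss (k q a : ℕ) : ℂ :=
  (q : ℂ)⁻¹ * ∑ r ∈ Finset.Icc 1 q, e ((a : ℝ) * (r : ℝ) ^ k / (q : ℝ))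

/-- The inner sum of the singular series over `a` coprime to `q`. -/
noncomputable def innerSum (k d N q : ℕ) : ℂ :=
  ∑ a ∈ (Finset.Icc 1 q).filter (fun a => Nat.Coprime a q),
    (warGauss k q a) ^ d * e (-((N : ℝ) * a / q))

/-!
Weyl differencing `k - 1` times reduces the complete sum `∑_{x mod q} e(a x^k / q)` to sums of
linear phases, each equal to `q` or `0` according as `k! h₁ ⋯ h_{k-1} a ≡ 0 (mod q)` or not.
Counting such `h` with the divisor bound `τ(q) ≪_ε q^ε` gives `|G(a/q)|^{2^{k-1}} ≪_ε q^{ε-1}`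
for `(a, q) = 1`. Since `|G| ≤ 1`, every `d ≥ 2^k + 1` has `|G|^d ≤ |G|^{2^k+1} ≪ q^{ε-2-2^{1-k}}`,
so the `q`-th term of the singular series is `≪ q^{-1-2^{-k}}`, uniformly in `d` and `N`.
-/

open Finset Polynomial

theorem exists_dvd_and_prod_eq_of_dvd_prod {M : Type*} [CommMonoid M] [DecompositionMonoid M]
    [Subsingleton Mˣ] {n : ℕ} {f : Fin n → M} {m : M} (hm : m ∣ ∏ i, f i) :
    ∃ g : Fin n → M, (∀ i, g i ∣ f i) ∧ ∏ i, g i = m := by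
  induction n generalizing m with
  | zero =>
    rw [Fin.prod_univ_zero, ← isUnit_iff_dvd_one, isUnit_iff_eq_one] at hm
    exact ⟨finZeroElim, finZeroElim, by simp [hm]⟩
  | succ n ih =>
    rw [Fin.prod_univ_succ] at hm
    obtain ⟨d₀, d, hd₀, hd, rfl⟩ := dvd_mul.mp hm
    obtain ⟨g, hg, rfl⟩ := ih hd
    exact ⟨Fin.cons d₀ g, Fin.cases hd₀ hg, by simp [Fin.prod_univ_succ]⟩

theorem Fintype.sum_fin_succ_pi {α M : Type*} [Fintype α] [AddCommMonoid M] {n : ℕ}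
    (f : (Fin (n + 1) → α) → M) : ∑ h, f h = ∑ h₀, ∑ t : Fin n → α, f (Fin.cons h₀ t) := by
  rw [← Fintype.sum_prod_type']
  exact (Fintype.sum_equiv (Fin.consEquiv fun _ => α) _ _ fun _ => rfl).symm

theorem exists_add_one_le_mul_pow {x : ℝ} (hx : 1 < x) :
    ∃ B : ℝ, 1 ≤ B ∧ ∀ n : ℕ, (n + 1 : ℝ) ≤ B * x ^ n := by
  refine ⟨max 1 (x - 1)⁻¹, le_max_left _ _, fun n => ?_⟩
  have hB : 1 ≤ max 1 (x - 1)⁻¹ * (x - 1) := by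
    calc 1 = (x - 1)⁻¹ * (x - 1) := (inv_mul_cancel₀ (sub_pos.mpr hx).ne').symm
      _ ≤ _ := mul_le_mul_of_nonneg_right (le_max_right _ _) (by linarith)
  have hBernoulli : 1 + n * (x - 1) ≤ x ^ n := by
    simpa using one_add_mul_le_pow (a := x - 1) (by linarith) n
  nlinarith [le_max_left 1 (x - 1)⁻¹, (n.cast_nonneg : (0 : ℝ) ≤ n)]

theorem Nat.rpow_eq_prod_primeFactors {n : ℕ} (hn : n ≠ 0) (ε : ℝ) :
    (n : ℝ) ^ ε = ∏ p ∈ n.primeFactors, ((p : ℝ) ^ ε) ^ n.factorization p := by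
  conv_lhs => rw [← Nat.prod_factorization_pow_eq_self hn]
  rw [Finsupp.prod, Nat.support_factorization, Nat.cast_prod,
    ← Real.finsetProd_rpow _ _ fun p _ => by positivity]
  refine prod_congr rfl fun p _ => ?_
  rw [Nat.cast_pow, Real.rpow_pow_comm (Nat.cast_nonneg p)]

theorem Nat.card_divisors_le_mul_rpow {ε : ℝ} (hε : 0 < ε) :
    ∃ D : ℝ, 0 ≤ D ∧ ∀ n : ℕ, n ≠ 0 → (n.divisors.card : ℝ) ≤ D * (n : ℝ) ^ ε := by
  -- Only primes `p ≤ 2 ^ (1 / ε)` can have `p ^ ε < 2`, and only they pay the factor `B`.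
  obtain ⟨B, hB, hBound⟩ := exists_add_one_le_mul_pow (Real.one_lt_rpow one_lt_two hε)
  set S := ⌈(2 : ℝ) ^ ε⁻¹⌉₊
  have hlocal : ∀ p a : ℕ, p.Prime →
      ((a + 1 : ℕ) : ℝ) ≤ (if p ≤ S then B else 1) * ((p : ℝ) ^ ε) ^ a := by
    intro p a hp
    have hp2 : (2 : ℝ) ≤ p := by exact_mod_cast hp.two_le
    split_ifs with hpS
    · calc ((a + 1 : ℕ) : ℝ) ≤ B * ((2 : ℝ) ^ ε) ^ a := by push_cast; exact hBound a
        _ ≤ B * ((p : ℝ) ^ ε) ^ a := by gcongr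
    · have hp : (2 : ℝ) ≤ (p : ℝ) ^ ε := by
        calc (2 : ℝ) = ((2 : ℝ) ^ ε⁻¹) ^ ε := by
              rw [← Real.rpow_mul zero_le_two, inv_mul_cancel₀ hε.ne', Real.rpow_one]
          _ ≤ (p : ℝ) ^ ε := by
              gcongr
              exact (Nat.le_ceil _).trans (by exact_mod_cast (not_le.mp hpS).le)
      calc ((a + 1 : ℕ) : ℝ) ≤ 2 ^ a := by exact_mod_cast a.lt_two_pow_self
        _ ≤ 1 * ((p : ℝ) ^ ε) ^ a := by rw [one_mul]; gcongr
  refine ⟨B ^ (S + 1), pow_nonneg (zero_le_one.trans hB) _, fun n hn => ?_⟩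
  have hsmall : #{p ∈ n.primeFactors | p ≤ S} ≤ S + 1 :=
    (card_le_card fun p hp => mem_range.mpr (Nat.lt_succ_of_le (mem_filter.mp hp).2)).trans
      (card_range _).le
  calc (n.divisors.card : ℝ) = ∏ p ∈ n.primeFactors, ((n.factorization p + 1 : ℕ) : ℝ) := by
        rw [Nat.card_divisors hn, Nat.cast_prod]
    _ ≤ ∏ p ∈ n.primeFactors, (if p ≤ S then B else 1) * ((p : ℝ) ^ ε) ^ n.factorization p :=
        prod_le_prod (fun _ _ => by positivity)
          fun p hp => hlocal p _ (Nat.prime_of_mem_primeFactors hp)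
    _ = B ^ #{p ∈ n.primeFactors | p ≤ S} * (n : ℝ) ^ ε := by
        rw [prod_mul_distrib, prod_ite, prod_const_one, mul_one, prod_const,
          Nat.rpow_eq_prod_primeFactors hn]
    _ ≤ B ^ (S + 1) * (n : ℝ) ^ ε := by gcongr

theorem Nat.card_divisors_pow_le_mul_rpow (j : ℕ) {ε : ℝ} (hε : 0 < ε) :
    ∃ D : ℝ, 0 ≤ D ∧ ∀ n : ℕ, n ≠ 0 → (n.divisors.card : ℝ) ^ j ≤ D * (n : ℝ) ^ ε := by
  obtain ⟨D, hD0, hD⟩ := Nat.card_divisors_le_mul_rpow (ε := ε / (j + 1)) (by positivity)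
  refine ⟨D ^ j, by positivity, fun n hn => ?_⟩
  have hn1 : (1 : ℝ) ≤ n := by exact_mod_cast Nat.one_le_iff_ne_zero.mpr hn
  calc (n.divisors.card : ℝ) ^ j ≤ (D * (n : ℝ) ^ (ε / (j + 1))) ^ j := by gcongr; exact hD n hn
    _ = D ^ j * (n : ℝ) ^ (ε / (j + 1) * j) := by
        rw [mul_pow, Real.rpow_mul_natCast (by positivity)]
    _ ≤ D ^ j * (n : ℝ) ^ ε := by
        refine mul_le_mul_of_nonneg_left (Real.rpow_le_rpow_of_exponent_le hn1 ?_) (by positivity)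
        rw [div_mul_eq_mul_div, div_le_iff₀ (by positivity)]
        nlinarith

namespace Polynomial

variable {R : Type*} [CommRing R]

noncomputable def difference (h : R) (P : R[X]) : R[X] := taylor h P - P

theorem eval_difference (h : R) (P : R[X]) (x : R) :
    (difference h P).eval x = P.eval (x + h) - P.eval x := by
  simp [difference, taylor_apply, eval_comp]

theorem coeff_taylor_of_natDegree_le {i : ℕ} (h : R) {P : R[X]} (hP : P.natDegree ≤ i + 1) :
    (taylor h P).coeff i = P.coeff i + (i + 1) * h * P.coeff (i + 1) := by
  have hdeg : (hasseDeriv i P).natDegree < 2 := (natDegree_hasseDeriv_le P i).trans_lt (by omega)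
  rw [taylor_coeff, eval_eq_sum_range' hdeg]
  simp [sum_range_succ, hasseDeriv_coeff, add_comm 1 i, Nat.choose_succ_self_right]
  ring

theorem coeff_difference_of_natDegree_le {i : ℕ} (h : R) {P : R[X]} (hP : P.natDegree ≤ i + 1) :
    (difference h P).coeff i = (i + 1) * h * P.coeff (i + 1) := by
  rw [difference, coeff_sub, coeff_taylor_of_natDegree_le h hP, add_sub_cancel_left]

theorem natDegree_difference_le {m : ℕ} (h : R) {P : R[X]} (hP : P.natDegree ≤ m + 1) :
    (difference h P).natDegree ≤ m := by
  refine natDegree_le_iff_coeff_eq_zero.mpr fun i hi => ?_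
  rw [coeff_difference_of_natDegree_le h (by omega : P.natDegree ≤ i + 1),
    coeff_eq_zero_of_natDegree_lt (by omega : P.natDegree < i + 1), mul_zero]

noncomputable def iteratedDifference : {n : ℕ} → (Fin n → R) → R[X] → R[X]
  | 0, _, P => P
  | _ + 1, h, P => iteratedDifference (Fin.tail h) (difference (h 0) P)

theorem natDegree_iteratedDifference_le {n m : ℕ} (h : Fin n → R) {P : R[X]}
    (hP : P.natDegree ≤ n + m) : (iteratedDifference h P).natDegree ≤ m := by
  induction n generalizing P with
  | zero => simpa [iteratedDifference] using hP
  | succ n ih => exact ih _ (natDegree_difference_le _ (by omega))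

theorem coeff_one_iteratedDifference {n : ℕ} (h : Fin n → R) {P : R[X]}
    (hP : P.natDegree ≤ n + 1) :
    (iteratedDifference h P).coeff 1 = (n + 1).factorial * (∏ i, h i) * P.coeff (n + 1) := by
  induction n generalizing P with
  | zero => simp [iteratedDifference]
  | succ n ih =>
    rw [iteratedDifference, ih _ (natDegree_difference_le _ hP),
      coeff_difference_of_natDegree_le _ hP, Fin.prod_univ_succ, Nat.factorial_succ (n + 1)]
    simp only [Fin.tail]
    push_cast
    ring

section ExpSum

variable [Fintype R] (ψ : AddChar R ℂ)

noncomputable def expSum (P : R[X]) : ℂ := ∑ x, ψ (P.eval x)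

theorem expSum_mul_conj (P : R[X]) :
    expSum ψ P * starRingEnd ℂ (expSum ψ P) = ∑ h, expSum ψ (difference h P) := by
  simp_rw [expSum, map_sum, ← AddChar.map_neg_eq_conj, sum_mul_sum, eval_difference,
    sub_eq_add_neg, AddChar.map_add_eq_mul]
  conv_lhs => rw [sum_comm]
  conv_rhs => rw [sum_comm]
  exact sum_congr rfl fun x _ =>
    (Equiv.sum_comp (Equiv.addLeft x) (fun y => ψ (P.eval y) * ψ (-P.eval x))).symm

theorem norm_expSum_sq_le (P : R[X]) :
    ‖expSum ψ P‖ ^ 2 ≤ ∑ h, ‖expSum ψ (difference h P)‖ := by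
  calc ‖expSum ψ P‖ ^ 2 = ‖expSum ψ P * starRingEnd ℂ (expSum ψ P)‖ := by
        rw [norm_mul, RCLike.norm_conj, sq]
    _ ≤ _ := expSum_mul_conj ψ P ▸ norm_sum_le _ _

theorem norm_expSum_pow_le (n : ℕ) (P : R[X]) :
    ‖expSum ψ P‖ ^ 2 ^ n ≤
      (Fintype.card R : ℝ) ^ (2 ^ n - n - 1) *
        ∑ h : Fin n → R, ‖expSum ψ (iteratedDifference h P)‖ := by
  induction n generalizing P with
  | zero => simp [iteratedDifference]
  | succ n ih =>
    have hn : n + 1 ≤ 2 ^ n := n.lt_two_pow_self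
    calc ‖expSum ψ P‖ ^ 2 ^ (n + 1) = (‖expSum ψ P‖ ^ 2) ^ 2 ^ n := by
          rw [← pow_mul, pow_succ']
      _ ≤ (∑ h, ‖expSum ψ (difference h P)‖) ^ 2 ^ n := by
          gcongr
          exact norm_expSum_sq_le ψ P
      _ ≤ (Fintype.card R : ℝ) ^ (2 ^ n - 1) * ∑ h, ‖expSum ψ (difference h P)‖ ^ 2 ^ n := by
          obtain ⟨m, hm⟩ : ∃ m, 2 ^ n = m + 1 := ⟨2 ^ n - 1, by omega⟩
          rw [hm, Nat.add_sub_cancel]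
          exact pow_sum_le_card_mul_sum_pow (fun _ _ => norm_nonneg _) m
      _ ≤ (Fintype.card R : ℝ) ^ (2 ^ n - 1) * ∑ h, (Fintype.card R : ℝ) ^ (2 ^ n - n - 1) *
            ∑ t : Fin n → R, ‖expSum ψ (iteratedDifference t (difference h P))‖ := by
          gcongr with h
          exact ih _
      _ = (Fintype.card R : ℝ) ^ (2 ^ (n + 1) - (n + 1) - 1) *
            ∑ h : Fin (n + 1) → R, ‖expSum ψ (iteratedDifference h P)‖ := by
          rw [← mul_sum, ← mul_assoc, ← pow_add, Fintype.sum_fin_succ_pi]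
          congr 2
          omega

theorem norm_expSum_of_natDegree_le_one [DecidableEq R] (hψ : ψ.IsPrimitive) {P : R[X]}
    (hP : P.natDegree ≤ 1) :
    ‖expSum ψ P‖ = if P.coeff 1 = 0 then (Fintype.card R : ℝ) else 0 := by
  have hlin : expSum ψ P = (∑ x, ψ (x * P.coeff 1)) * ψ (P.coeff 0) := by
    rw [expSum, sum_mul]
    refine sum_congr rfl fun x _ => ?_
    rw [← AddChar.map_add_eq_mul]
    conv_lhs => rw [eq_X_add_C_of_natDegree_le_one hP]
    rw [eval_add, eval_mul, eval_C, eval_C, eval_X, mul_comm]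
  rw [hlin, norm_mul, AddChar.norm_apply, mul_one, AddChar.sum_mulShift _ hψ]
  split_ifs <;> simp

theorem norm_expSum_le_card (P : R[X]) : ‖expSum ψ P‖ ≤ Fintype.card R :=
  (norm_sum_le _ _).trans (by simp [AddChar.norm_apply])

theorem norm_expSum_C_mul_X_pow_pow_le [DecidableEq R] (hψ : ψ.IsPrimitive) (a : R) (j : ℕ) :
    ‖expSum ψ (C a * X ^ (j + 1))‖ ^ 2 ^ j ≤ (Fintype.card R : ℝ) ^ (2 ^ j - j) *
      #{h : Fin j → R | ((j + 1).factorial : R) * (∏ i, h i) * a = 0} := by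
  have hP : (C a * X ^ (j + 1)).natDegree ≤ j + 1 := natDegree_C_mul_X_pow_le a _
  have hterm : ∀ h : Fin j → R, ‖expSum ψ (iteratedDifference h (C a * X ^ (j + 1)))‖ =
      if ((j + 1).factorial : R) * (∏ i, h i) * a = 0 then (Fintype.card R : ℝ) else 0 := by
    intro h
    rw [norm_expSum_of_natDegree_le_one ψ hψ (natDegree_iteratedDifference_le h hP),
      coeff_one_iteratedDifference h hP, coeff_C_mul_X_pow, if_pos rfl]
  have hj : j + 1 ≤ 2 ^ j := j.lt_two_pow_self
  calc ‖expSum ψ (C a * X ^ (j + 1))‖ ^ 2 ^ j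
      ≤ (Fintype.card R : ℝ) ^ (2 ^ j - j - 1) *
          ∑ h : Fin j → R, ‖expSum ψ (iteratedDifference h (C a * X ^ (j + 1)))‖ :=
        norm_expSum_pow_le ψ j _
    _ = (Fintype.card R : ℝ) ^ (2 ^ j - j - 1) * (Fintype.card R *
          #{h : Fin j → R | ((j + 1).factorial : R) * (∏ i, h i) * a = 0}) := by
        simp_rw [hterm]
        rw [sum_ite, sum_const_zero, add_zero, sum_const, nsmul_eq_mul]
        ring
    _ = _ := by
        rw [← mul_assoc, ← pow_succ]
        congr 2
        omega

end ExpSum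

end Polynomial

namespace ZMod

variable {q : ℕ} [NeZero q]

theorem card_filter_dvd_val_le {g : ℕ} (hg : g ∣ q) : #{x : ZMod q | g ∣ x.val} ≤ q / g := by
  refine (card_le_card_of_injOn (fun x => x.val / g) (t := range (q / g)) ?_ ?_).trans
    (card_range _).le
  · intro x _
    exact mem_range.mpr (Nat.div_lt_div_of_lt_of_dvd hg x.val_lt)
  · intro x hx y hy hxy
    simp only [coe_filter, mem_univ, true_and, Set.mem_ofPred_eq] at hx hy
    refine val_injective q ?_
    rw [← Nat.div_mul_cancel hx, ← Nat.div_mul_cancel hy]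
    exact congrArg (· * g) hxy

theorem filter_natCast_mul_prod_eq_zero_subset (K j : ℕ) :
    ({h : Fin j → ZMod q | (K : ZMod q) * ∏ i, h i = 0} : Finset _) ⊆
      {g ∈ Fintype.piFinset fun _ : Fin j => q.divisors | q ∣ K * ∏ i, g i}.biUnion
        fun g => Fintype.piFinset fun i => {x : ZMod q | g i ∣ x.val} := by
  intro h hh
  simp only [mem_filter, mem_univ, true_and] at hh
  have hdvd : q ∣ K * ∏ i, (h i).val := by
    rw [← natCast_eq_zero_iff]
    simpa [natCast_zmod_val] using hh
  obtain ⟨d₀, d, hd₀, hd, hqd⟩ := dvd_mul.mp hdvd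
  obtain ⟨g, hg, rfl⟩ := exists_dvd_and_prod_eq_of_dvd_prod hd
  have hgq : ∀ i, g i ∣ q :=
    fun i => (dvd_prod_of_mem g (mem_univ i)).trans ⟨d₀, by rw [hqd, mul_comm]⟩
  simp only [mem_biUnion, mem_filter, Fintype.mem_piFinset, Nat.mem_divisors]
  exact ⟨g, ⟨fun i => ⟨hgq i, NeZero.ne q⟩, hqd ▸ mul_dvd_mul_right hd₀ _⟩,
    fun i => by simp [hg i]⟩

theorem card_piFinset_dvd_val_le {K j : ℕ} (hK : K ≠ 0) {g : Fin j → ℕ} (hgq : ∀ i, g i ∣ q)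
    (hqg : q ∣ K * ∏ i, g i) :
    (#(Fintype.piFinset fun i => {x : ZMod q | g i ∣ x.val}) : ℝ) ≤ K * q ^ j / q := by
  have hq : (0 : ℝ) < q := by exact_mod_cast NeZero.pos q
  have hg0 : ∀ i, g i ≠ 0 := fun i => ne_zero_of_dvd_ne_zero (NeZero.ne q) (hgq i)
  have hKg : (q : ℝ) ≤ K * ∏ i, (g i : ℝ) := by
    exact_mod_cast Nat.le_of_dvd (Nat.pos_of_ne_zero
      (mul_ne_zero hK (prod_ne_zero_iff.mpr fun i _ => hg0 i))) hqg
  calc (#(Fintype.piFinset fun i => {x : ZMod q | g i ∣ x.val}) : ℝ)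
      ≤ ∏ i, ((q : ℝ) / g i) := by
        rw [Fintype.card_piFinset, Nat.cast_prod]
        gcongr with i
        rw [← Nat.cast_div (hgq i) (Nat.cast_ne_zero.mpr (hg0 i))]
        exact_mod_cast card_filter_dvd_val_le (hgq i)
    _ = q ^ j / ∏ i, (g i : ℝ) := by
        rw [prod_div_distrib, prod_const, card_univ, Fintype.card_fin]
    _ ≤ K * q ^ j / q := by
        rw [div_le_div_iff₀ (prod_pos fun i _ => by simpa using Nat.pos_of_ne_zero (hg0 i)) hq]
        nlinarith [pow_pos hq j]

theorem card_filter_natCast_mul_prod_eq_zero_le {K : ℕ} (hK : K ≠ 0) (j : ℕ) :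
    (#{h : Fin j → ZMod q | (K : ZMod q) * ∏ i, h i = 0} : ℝ) ≤
      K * (q.divisors.card : ℝ) ^ j * q ^ j / q := by
  set F := {g ∈ Fintype.piFinset fun _ : Fin j => q.divisors | q ∣ K * ∏ i, g i}
  have hF : (#F : ℝ) ≤ (q.divisors.card : ℝ) ^ j := by
    exact_mod_cast (card_filter_le _ _).trans (by simp)
  calc (#{h : Fin j → ZMod q | (K : ZMod q) * ∏ i, h i = 0} : ℝ)
      ≤ ∑ g ∈ F, (#(Fintype.piFinset fun i => {x : ZMod q | g i ∣ x.val}) : ℝ) := by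
        exact_mod_cast (card_le_card (filter_natCast_mul_prod_eq_zero_subset K j)).trans
          card_biUnion_le
    _ ≤ #F * (K * q ^ j / q) := by
        rw [← nsmul_eq_mul, ← sum_const]
        refine sum_le_sum fun g hg => ?_
        simp only [F, mem_filter, Fintype.mem_piFinset, Nat.mem_divisors] at hg
        exact card_piFinset_dvd_val_le hK (fun i => (hg.1 i).1) hg.2
    _ ≤ (q.divisors.card : ℝ) ^ j * (K * q ^ j / q) := by gcongr
    _ = K * (q.divisors.card : ℝ) ^ j * q ^ j / q := by ring

theorem sum_Icc_one_natCast {M : Type*} [AddCommMonoid M] (g : ZMod q → M) :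
    ∑ r ∈ Icc 1 q, g r = ∑ x, g x := by
  have hq := NeZero.pos q
  refine sum_nbij' (fun r => (r : ZMod q)) (fun x => if x = 0 then q else x.val)
    (fun _ _ => mem_univ _) (fun x _ => ?_) (fun r hr => ?_) (fun x _ => ?_) fun _ _ => rfl
  · split_ifs with hx
    · exact mem_Icc.mpr ⟨hq, le_rfl⟩
    · exact mem_Icc.mpr ⟨Nat.pos_of_ne_zero ((val_ne_zero x).mpr hx), x.val_lt.le⟩
  · obtain ⟨hr1, hrq⟩ := mem_Icc.mp hr
    split_ifs with hr0
    · rw [natCast_eq_zero_iff] at hr0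
      exact le_antisymm (Nat.le_of_dvd hr1 hr0) hrq
    · rw [val_natCast_of_lt (lt_of_le_of_ne hrq fun h => hr0 (h ▸ natCast_self q))]
  · split_ifs with hx
    · rw [hx, natCast_self]
    · exact natCast_zmod_val x

end ZMod

theorem e_natCast_div_eq_stdAddChar (n q : ℕ) [NeZero q] :
    e ((n : ℝ) / q) = ZMod.stdAddChar (n : ZMod q) := by
  rw [← Int.cast_natCast (R := ZMod q), ZMod.stdAddChar_coe, e]
  push_cast
  ring_nf

theorem warGauss_eq_expSum (k q a : ℕ) [NeZero q] :
    warGauss k q a = (q : ℂ)⁻¹ * expSum ZMod.stdAddChar (C (a : ZMod q) * X ^ k) := by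
  rw [warGauss, expSum, ← ZMod.sum_Icc_one_natCast]
  congr 1
  refine sum_congr rfl fun r _ => ?_
  rw [← Nat.cast_pow, ← Nat.cast_mul, e_natCast_div_eq_stdAddChar]
  simp

theorem norm_e (x : ℝ) : ‖e x‖ = 1 := by
  rw [e, show 2 * (Real.pi : ℂ) * Complex.I * x = ((2 * Real.pi * x : ℝ) : ℂ) * Complex.I by
    push_cast; ring]
  exact Complex.norm_exp_ofReal_mul_I _

theorem norm_warGauss_eq (k q a : ℕ) [NeZero q] :
    ‖warGauss k q a‖ = ‖expSum ZMod.stdAddChar (C (a : ZMod q) * X ^ k)‖ / q := by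
  rw [warGauss_eq_expSum, norm_mul, norm_inv, Complex.norm_natCast, inv_mul_eq_div]

theorem norm_warGauss_le_one (k q a : ℕ) [NeZero q] : ‖warGauss k q a‖ ≤ 1 := by
  rw [norm_warGauss_eq, div_le_one (by exact_mod_cast NeZero.pos q)]
  simpa using norm_expSum_le_card ZMod.stdAddChar (C (a : ZMod q) * X ^ k)

theorem norm_warGauss_pow_le (j : ℕ) {q a : ℕ} [NeZero q] (ha : a.Coprime q) :
    ‖warGauss (j + 1) q a‖ ^ 2 ^ j ≤ (j + 1).factorial * (q.divisors.card : ℝ) ^ j / q := by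
  have hq : (0 : ℝ) < q := by exact_mod_cast NeZero.pos q
  have hj : j ≤ 2 ^ j := j.lt_two_pow_self.le
  set S := expSum ZMod.stdAddChar (C (a : ZMod q) * X ^ (j + 1))
  have hS : ‖S‖ ^ 2 ^ j ≤
      (q : ℝ) ^ (2 ^ j - j) * ((j + 1).factorial * (q.divisors.card : ℝ) ^ j * q ^ j / q) := by
    have hweyl := norm_expSum_C_mul_X_pow_pow_le ZMod.stdAddChar
      (ZMod.isPrimitive_stdAddChar q) (a : ZMod q) j
    have hunit : IsUnit (a : ZMod q) := (ZMod.unitOfCoprime a ha).isUnit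
    simp_rw [hunit.mul_left_eq_zero, ZMod.card] at hweyl
    exact hweyl.trans (mul_le_mul_of_nonneg_left
      (ZMod.card_filter_natCast_mul_prod_eq_zero_le (j + 1).factorial_ne_zero j) (by positivity))
  rw [norm_warGauss_eq, div_pow, div_le_div_iff₀ (by positivity) hq]
  calc ‖S‖ ^ 2 ^ j * q ≤ _ := mul_le_mul_of_nonneg_right hS hq.le
    _ = (j + 1).factorial * (q.divisors.card : ℝ) ^ j * q ^ 2 ^ j := by
        rw [← pow_sub_mul_pow _ hj]
        field_simp

theorem pow_le_rpow_div_of_pow_le {x W : ℝ} {m : ℕ} (hx : 0 ≤ x) (hm : m ≠ 0) (h : x ^ m ≤ W)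
    (n : ℕ) : x ^ n ≤ W ^ ((n : ℝ) / m) := by
  calc x ^ n = (x ^ m) ^ ((n : ℝ) / m) := by
        rw [← Real.rpow_natCast x m, ← Real.rpow_mul hx, mul_div_cancel₀ _ (by exact_mod_cast hm),
          Real.rpow_natCast]
    _ ≤ W ^ ((n : ℝ) / m) := Real.rpow_le_rpow (by positivity) h (by positivity)

theorem norm_innerSum_le (j d N q : ℕ) [NeZero q] (hd : 2 ^ (j + 1) + 1 ≤ d) :
    ‖innerSum (j + 1) d N q‖ ≤ q *
      ((j + 1).factorial * (q.divisors.card : ℝ) ^ j / q) ^ ((2 ^ (j + 1) + 1 : ℝ) / 2 ^ j) := by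
  have hterm : ∀ a ∈ (Icc 1 q).filter (fun a => a.Coprime q),
      ‖warGauss (j + 1) q a ^ d * e (-((N : ℝ) * a / q))‖ ≤
        ((j + 1).factorial * (q.divisors.card : ℝ) ^ j / q) ^ ((2 ^ (j + 1) + 1 : ℝ) / 2 ^ j) := by
    intro a ha
    rw [norm_mul, norm_pow, norm_e, mul_one]
    refine (pow_le_pow_of_le_one (norm_nonneg _) (norm_warGauss_le_one _ _ _) hd).trans ?_
    exact_mod_cast pow_le_rpow_div_of_pow_le (norm_nonneg _) (by positivity)
      (norm_warGauss_pow_le j (mem_filter.mp ha).2) _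
  have hcard : #((Icc 1 q).filter (fun a => a.Coprime q)) ≤ q :=
    (card_filter_le _ _).trans (by simp)
  calc ‖innerSum (j + 1) d N q‖ ≤ _ := norm_sum_le _ _
    _ ≤ _ := sum_le_sum hterm
    _ ≤ _ := by
        rw [sum_const, nsmul_eq_mul]
        exact mul_le_mul_of_nonneg_right (by exact_mod_cast hcard) (by positivity)

theorem exists_norm_innerSum_le (j : ℕ) :
    ∃ B : ℝ, ∀ d N q : ℕ, 2 ^ (j + 1) + 1 ≤ d →
      ‖innerSum (j + 1) d N q‖ ≤ B * (q : ℝ) ^ (-(1 + 1 / 2 ^ (j + 1)) : ℝ) := by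
  set s : ℝ := (2 ^ (j + 1) + 1) / 2 ^ j
  -- chosen so that the exponent `1 + (ε - 1) * s` below is exactly `-(1 + 1 / 2 ^ (j + 1))`
  set ε : ℝ := 1 / (2 ^ (j + 1) * s)
  obtain ⟨D, hD0, hD⟩ := Nat.card_divisors_pow_le_mul_rpow j (ε := ε) (by positivity)
  set c : ℝ := (j + 1).factorial * D
  refine ⟨c ^ s, fun d N q hd => ?_⟩
  rcases eq_or_ne q 0 with rfl | hq
  · rw [Nat.cast_zero, Real.zero_rpow (neg_neg_of_pos (by positivity)).ne, mul_zero]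
    simp [innerSum]
  have : NeZero q := ⟨hq⟩
  have hq0 : (0 : ℝ) < q := by exact_mod_cast NeZero.pos q
  have hW : (j + 1).factorial * (q.divisors.card : ℝ) ^ j / q ≤ c * (q : ℝ) ^ (ε - 1) := by
    rw [Real.rpow_sub_one hq0.ne', ← mul_div_assoc, mul_assoc]
    gcongr
    exact hD q hq
  calc ‖innerSum (j + 1) d N q‖ ≤ q * ((j + 1).factorial * (q.divisors.card : ℝ) ^ j / q) ^ s :=
        norm_innerSum_le j d N q hd
    _ ≤ q * (c * (q : ℝ) ^ (ε - 1)) ^ s := by gcongr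
    _ = c ^ s * (q : ℝ) ^ (1 + (ε - 1) * s) := by
        rw [Real.mul_rpow (by positivity) (by positivity), ← Real.rpow_mul hq0.le,
          Real.rpow_add hq0, Real.rpow_one]
        ring
    _ = c ^ s * (q : ℝ) ^ (-(1 + 1 / 2 ^ (j + 1)) : ℝ) := by
        congr 2
        simp only [ε, s]
        field_simp
        ring

theorem singular_series_abs_convergence_and_upper_bound (k : ℕ) (hk : 2 ≤ k) :
    ∃ A : ℝ, 0 < A ∧ ∀ d : ℕ, 2 ^ k + 1 ≤ d → ∀ N : ℕ,
      Summable (fun q : ℕ => ‖innerSum k d N q‖) ∧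
      ‖∑' q : ℕ, innerSum k d N q‖ ≤ A := by
  obtain ⟨j, rfl⟩ : ∃ j, k = j + 1 := ⟨k - 1, by omega⟩
  obtain ⟨B, hB⟩ := exists_norm_innerSum_le j
  have hmajorant : Summable fun q : ℕ => B * (q : ℝ) ^ (-(1 + 1 / 2 ^ (j + 1)) : ℝ) := by
    refine (Real.summable_nat_rpow.mpr ?_).mul_left B
    have : (0 : ℝ) < 1 / 2 ^ (j + 1) := by positivity
    linarith
  refine ⟨max 1 (∑' q : ℕ, B * (q : ℝ) ^ (-(1 + 1 / 2 ^ (j + 1)) : ℝ)),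
    lt_max_of_lt_left one_pos, fun d hd N => ⟨?_, ?_⟩⟩
  · exact hmajorant.of_nonneg_of_le (fun _ => norm_nonneg _) fun q => hB d N q hd
  · exact (tsum_of_norm_bounded hmajorant.hasSum fun q => hB d N q hd).trans (le_max_right _ _)
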